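/- Let p > 1 and δ ≥ 0, and define A(a) = (δ+|a|)^{p-2} a and F(a) = (δ+|a|)^{(p-2)/2} a for a ∈ ℝ^d. Then there exist constants c, C > 0 depending only on p such that for all a, b ∈ ℝ^d: c·|F(a) − F(b)|² ≤ (A(a) − A(b))·(a − b) ≤ C·|F(a) − F(b)|². -/

import Mathlib

/-!
Write `t = ‖a‖`, `r = ‖b‖`, `s = ⟪a, b⟫` and `α = (δ + t) ^ ((p - 2) / 2)`,
`β = (δ + r) ^ ((p - 2) / 2)`, so that `A a = α² • a` and `F a = α • a`. Both
`⟪A a - A b, a - b⟫` and `‖F a - F b‖²` are affine in `s ∈ [-t r, t r]`, so it suffices to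
compare them at `s = ± t r`, i.e. for collinear `a`, `b`. At `s = -t r` the comparison is
elementary. At `s = t r` it reduces to the one-dimensional fact that for `0 ≤ r ≤ t` the increment
of `φₘ(t) = (δ + t) ^ m * t` lies between `min 1 (1 + m)` and `max 1 (1 + m)` times
`(δ + t) ^ m * (t - r)`, which follows from Bernoulli's inequality applied to
`φₘ(t) = (δ + t) ^ (m + 1) - δ (δ + t) ^ m`. Taking `m = p - 2` and `m = (p - 2) / 2`, both sides
are then comparable to `(δ + t) ^ (p - 2) * (t - r) ^ 2`.
-/

open Real RealInnerProductSpace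

lemma rpow_sub_rpow_le_mul_rpow_sub_one_mul {u v q : ℝ} (hv : 0 ≤ v) (hvu : v ≤ u)
    (hq : 1 ≤ q) : u ^ q - v ^ q ≤ q * u ^ (q - 1) * (u - v) := by
  rcases (hv.trans hvu).eq_or_lt with hu | hu
  · obtain rfl : v = 0 := by linarith
    simp [← hu]
  have hb := one_add_mul_self_le_rpow_one_add (s := v / u - 1)
    (by linarith [div_nonneg hv hu.le]) hq
  rw [add_sub_cancel, div_rpow hv hu.le, le_div_iff₀ (rpow_pos_of_pos hu q)] at hb
  rw [rpow_sub_one hu.ne']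
  have : (1 + q * (v / u - 1)) * u ^ q = u ^ q - q * (u ^ q / u) * (u - v) := by
    field_simp; ring
  linarith

lemma mul_rpow_sub_one_mul_le_rpow_sub_rpow {u v q : ℝ} (hv : 0 ≤ v) (hvu : v ≤ u)
    (hq₀ : 0 ≤ q) (hq₁ : q ≤ 1) : q * u ^ (q - 1) * (u - v) ≤ u ^ q - v ^ q := by
  rcases (hv.trans hvu).eq_or_lt with hu | hu
  · obtain rfl : v = 0 := by linarith
    simp [← hu]
  have hb := rpow_one_add_le_one_add_mul_self (s := v / u - 1)
    (by linarith [div_nonneg hv hu.le]) hq₀ hq₁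
  rw [add_sub_cancel, div_rpow hv hu.le, div_le_iff₀ (rpow_pos_of_pos hu q)] at hb
  rw [rpow_sub_one hu.ne']
  have : (1 + q * (v / u - 1)) * u ^ q = u ^ q - q * (u ^ q / u) * (u - v) := by
    field_simp; ring
  linarith

lemma rpow_div_two_sq {x : ℝ} (hx : 0 ≤ x) (y : ℝ) : (x ^ (y / 2)) ^ 2 = x ^ y := by
  rw [← rpow_mul_natCast hx]; norm_num

lemma add_mul_le_add_mul_of_abs_le {a b c d s M : ℝ} (hs : |s| ≤ M)
    (hM : a + b * M ≤ c + d * M) (hnegM : a - b * M ≤ c - d * M) : a + b * s ≤ c + d * s := by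
  obtain ⟨hs₁, hs₂⟩ := abs_le.mp hs
  rcases le_total b d with hbd | hbd
  · nlinarith [mul_le_mul_of_nonneg_left hs₁ (sub_nonneg.2 hbd)]
  · nlinarith [mul_le_mul_of_nonneg_left hs₂ (sub_nonneg.2 hbd)]

section InnerProduct

variable {E : Type*} [NormedAddCommGroup E] [InnerProductSpace ℝ E]

lemma inner_smul_sub_smul_sub (α β : ℝ) (a b : E) :
    ⟪α • a - β • b, a - b⟫ = α * ‖a‖ ^ 2 + β * ‖b‖ ^ 2 - (α + β) * ⟪a, b⟫ := by
  simp only [inner_sub_left, inner_sub_right, real_inner_smul_left, real_inner_self_eq_norm_sq,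
    real_inner_comm a b]
  ring

lemma norm_smul_sub_smul_sq (α β : ℝ) (a b : E) :
    ‖α • a - β • b‖ ^ 2 = α ^ 2 * ‖a‖ ^ 2 + β ^ 2 * ‖b‖ ^ 2 - 2 * (α * β) * ⟪a, b⟫ := by
  rw [norm_sub_sq_real, norm_smul, norm_smul, real_inner_smul_left, real_inner_smul_right,
    mul_pow, mul_pow, Real.norm_eq_abs, Real.norm_eq_abs, sq_abs, sq_abs]
  ring

end InnerProduct

namespace ShiftedPower

variable {E : Type*} [NormedAddCommGroup E] [InnerProductSpace ℝ E]

noncomputable def A (p δ : ℝ) (a : E) : E := (δ + ‖a‖) ^ (p - 2) • a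

noncomputable def F (p δ : ℝ) (a : E) : E := (δ + ‖a‖) ^ ((p - 2) / 2) • a

section Profile

variable {δ m t r : ℝ}

lemma add_rpow_mul_self_eq (h : 0 ≤ δ + t) (hm : m + 1 ≠ 0) :
    (δ + t) ^ m * t = (δ + t) ^ (m + 1) - δ * (δ + t) ^ m := by
  rw [rpow_add_one' h hm]; ring

lemma min_mul_le_add_rpow_mul_self_sub (hm : -1 < m) (hδ : 0 ≤ δ) (hr : 0 ≤ r) (hrt : r ≤ t) :
    min 1 (1 + m) * ((δ + t) ^ m * (t - r)) ≤ (δ + t) ^ m * t - (δ + r) ^ m * r := by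
  rcases le_or_gt 0 m with hm₀ | hm₀
  · have hmono : (δ + r) ^ m ≤ (δ + t) ^ m := rpow_le_rpow (by linarith) (by linarith) hm₀
    rw [min_eq_left (by linarith)]
    linear_combination mul_le_mul_of_nonneg_right hmono hr
  · have hδmono : δ * (δ + t) ^ m ≤ δ * (δ + r) ^ m := by
      rcases hδ.eq_or_lt with rfl | hδ
      · simp
      exact mul_le_mul_of_nonneg_left
        (rpow_le_rpow_of_nonpos (by linarith) (by linarith) hm₀.le) hδ.le
    have htangent := mul_rpow_sub_one_mul_le_rpow_sub_rpow (u := δ + t) (v := δ + r)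
      (by linarith) (by linarith) (by linarith : 0 ≤ m + 1) (by linarith)
    rw [add_sub_cancel_right] at htangent
    rw [min_eq_right (by linarith), add_rpow_mul_self_eq (by linarith) (by linarith),
      add_rpow_mul_self_eq (by linarith) (by linarith)]
    linear_combination htangent + hδmono

lemma add_rpow_mul_self_sub_le_max_mul (hm : -1 < m) (hδ : 0 ≤ δ) (hr : 0 ≤ r) (hrt : r ≤ t) :
    (δ + t) ^ m * t - (δ + r) ^ m * r ≤ max 1 (1 + m) * ((δ + t) ^ m * (t - r)) := by
  rcases le_or_gt 0 m with hm₀ | hm₀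
  · have hδmono : δ * (δ + r) ^ m ≤ δ * (δ + t) ^ m :=
      mul_le_mul_of_nonneg_left (rpow_le_rpow (by linarith) (by linarith) hm₀) hδ
    have htangent := rpow_sub_rpow_le_mul_rpow_sub_one_mul (u := δ + t) (v := δ + r)
      (by linarith) (by linarith) (by linarith : 1 ≤ m + 1)
    rw [add_sub_cancel_right] at htangent
    rw [max_eq_right (by linarith), add_rpow_mul_self_eq (by linarith) (by linarith),
      add_rpow_mul_self_eq (by linarith) (by linarith)]
    linear_combination htangent + hδmono
  · have hmono : (δ + t) ^ m * r ≤ (δ + r) ^ m * r := by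
      rcases hr.eq_or_lt with rfl | hr
      · simp
      exact mul_le_mul_of_nonneg_right
        (rpow_le_rpow_of_nonpos (by linarith) (by linarith) hm₀.le) hr.le
    rw [max_eq_left (by linarith)]
    linear_combination hmono

end Profile

lemma bounds_of_collinear_bounds {α β t r s c C : ℝ} (hα : 0 ≤ α) (hβ : 0 ≤ β)
    (hs : |s| ≤ t * r) (hc₀ : 0 ≤ c) (hc₁ : c ≤ 1) (hC : 4 ≤ C)
    (hlower : c * (α * t - β * r) ^ 2 ≤ (t - r) * (α ^ 2 * t - β ^ 2 * r))
    (hupper : (t - r) * (α ^ 2 * t - β ^ 2 * r) ≤ C * (α * t - β * r) ^ 2) :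
    c * (α ^ 2 * t ^ 2 + β ^ 2 * r ^ 2 - 2 * (α * β) * s)
        ≤ α ^ 2 * t ^ 2 + β ^ 2 * r ^ 2 - (α ^ 2 + β ^ 2) * s ∧
      α ^ 2 * t ^ 2 + β ^ 2 * r ^ 2 - (α ^ 2 + β ^ 2) * s
        ≤ C * (α ^ 2 * t ^ 2 + β ^ 2 * r ^ 2 - 2 * (α * β) * s) := by
  have htr : 0 ≤ t * r := (abs_nonneg s).trans hs
  have hαβtr : 0 ≤ α * β * (t * r) := by positivity
  have hD : 0 ≤ (t - r) * (α ^ 2 * t - β ^ 2 * r) := (by positivity : 0 ≤ c * _).trans hlower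
  constructor
  · have key := add_mul_le_add_mul_of_abs_le (a := c * (α ^ 2 * t ^ 2 + β ^ 2 * r ^ 2))
      (b := -(2 * c * (α * β))) (c := α ^ 2 * t ^ 2 + β ^ 2 * r ^ 2) (d := -(α ^ 2 + β ^ 2)) hs
      (by linear_combination hlower)
      (by nlinarith [sq_nonneg (α - β), sq_nonneg (α * t + β * r)])
    linear_combination key
  · have key := add_mul_le_add_mul_of_abs_le (a := α ^ 2 * t ^ 2 + β ^ 2 * r ^ 2)
      (b := -(α ^ 2 + β ^ 2)) (c := C * (α ^ 2 * t ^ 2 + β ^ 2 * r ^ 2))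
      (d := -(2 * C * (α * β))) hs
      (by linear_combination hupper)
      (by nlinarith [sq_nonneg (α * t + β * r)])
    linear_combination key

noncomputable def lowerConst (p : ℝ) : ℝ := min 1 (p - 1) / max 1 (p / 2) ^ 2

noncomputable def upperConst (p : ℝ) : ℝ := max (max 1 (p - 1) / min 1 (p / 2) ^ 2) 4

lemma lowerConst_pos {p : ℝ} (hp : 1 < p) : 0 < lowerConst p :=
  div_pos (lt_min one_pos (by linarith)) (by positivity)

lemma lowerConst_le_one (p : ℝ) : lowerConst p ≤ 1 := by
  have : (1 : ℝ) ≤ max 1 (p / 2) ^ 2 := one_le_pow₀ (le_max_left _ _)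
  exact div_le_one_of_le₀ ((min_le_left _ _).trans this) (by positivity)

lemma upperConst_pos (p : ℝ) : 0 < upperConst p :=
  lt_of_lt_of_le (by norm_num) (le_max_right _ _)

variable {p δ t r : ℝ}

lemma collinear_bounds_of_le (hp : 1 < p) (hδ : 0 ≤ δ) (hr : 0 ≤ r) (hrt : r ≤ t) :
    lowerConst p * ((δ + t) ^ ((p - 2) / 2) * t - (δ + r) ^ ((p - 2) / 2) * r) ^ 2
      ≤ (t - r) * ((δ + t) ^ (p - 2) * t - (δ + r) ^ (p - 2) * r) ∧
    (t - r) * ((δ + t) ^ (p - 2) * t - (δ + r) ^ (p - 2) * r)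
      ≤ upperConst p * ((δ + t) ^ ((p - 2) / 2) * t - (δ + r) ^ ((p - 2) / 2) * r) ^ 2 := by
  have hm : -1 < p - 2 := by linarith
  have hm' : -1 < (p - 2) / 2 := by linarith
  have hF₁ := min_mul_le_add_rpow_mul_self_sub hm' hδ hr hrt
  have hF₂ := add_rpow_mul_self_sub_le_max_mul hm' hδ hr hrt
  have hA₁ := min_mul_le_add_rpow_mul_self_sub hm hδ hr hrt
  have hA₂ := add_rpow_mul_self_sub_le_max_mul hm hδ hr hrt
  rw [show 1 + (p - 2) / 2 = p / 2 by ring] at hF₁ hF₂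
  rw [show 1 + (p - 2) = p - 1 by ring] at hA₁ hA₂
  set dF := (δ + t) ^ ((p - 2) / 2) * t - (δ + r) ^ ((p - 2) / 2) * r
  set Q := (δ + t) ^ ((p - 2) / 2) * (t - r)
  have hQ : 0 ≤ Q := mul_nonneg (rpow_nonneg (by linarith) _) (by linarith)
  have hQsq : Q ^ 2 = (δ + t) ^ (p - 2) * (t - r) * (t - r) := by
    rw [mul_pow, rpow_div_two_sq (by linarith)]; ring
  have hmin : 0 < min 1 (p / 2) := lt_min one_pos (by linarith)
  have hdF : 0 ≤ dF := (mul_nonneg hmin.le hQ).trans hF₁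
  have hD₁ := mul_le_mul_of_nonneg_right hA₁ (by linarith : 0 ≤ t - r)
  have hD₂ := mul_le_mul_of_nonneg_right hA₂ (by linarith : 0 ≤ t - r)
  constructor
  · calc lowerConst p * dF ^ 2 ≤ lowerConst p * (max 1 (p / 2) * Q) ^ 2 := by
          gcongr
          exact (lowerConst_pos hp).le
      _ = min 1 (p - 1) * Q ^ 2 := by
          rw [lowerConst, mul_pow]; field_simp
      _ ≤ _ := by linear_combination hD₁ + min 1 (p - 1) * hQsq
  · calc (t - r) * ((δ + t) ^ (p - 2) * t - (δ + r) ^ (p - 2) * r)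
          ≤ max 1 (p - 1) * Q ^ 2 := by linear_combination hD₂ - max 1 (p - 1) * hQsq
      _ = max 1 (p - 1) / min 1 (p / 2) ^ 2 * (min 1 (p / 2) * Q) ^ 2 := by
          field_simp
      _ ≤ upperConst p * dF ^ 2 :=
          mul_le_mul (le_max_left _ _) (pow_le_pow_left₀ (mul_nonneg hmin.le hQ) hF₁ 2)
            (by positivity) (upperConst_pos p).le

lemma collinear_bounds (hp : 1 < p) (hδ : 0 ≤ δ) (ht : 0 ≤ t) (hr : 0 ≤ r) :
    lowerConst p * ((δ + t) ^ ((p - 2) / 2) * t - (δ + r) ^ ((p - 2) / 2) * r) ^ 2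
      ≤ (t - r) * ((δ + t) ^ (p - 2) * t - (δ + r) ^ (p - 2) * r) ∧
    (t - r) * ((δ + t) ^ (p - 2) * t - (δ + r) ^ (p - 2) * r)
      ≤ upperConst p * ((δ + t) ^ ((p - 2) / 2) * t - (δ + r) ^ ((p - 2) / 2) * r) ^ 2 := by
  rcases le_total r t with hrt | htr
  · exact collinear_bounds_of_le hp hδ hr hrt
  · obtain ⟨hlower, hupper⟩ := collinear_bounds_of_le hp hδ ht htr
    exact ⟨by linear_combination hlower, by linear_combination hupper⟩

theorem inner_A_sub_A_equiv_norm_F_sub_F_sq (hp : 1 < p) (hδ : 0 ≤ δ) (a b : E) :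
    lowerConst p * ‖F p δ a - F p δ b‖ ^ 2 ≤ ⟪A p δ a - A p δ b, a - b⟫ ∧
      ⟪A p δ a - A p δ b, a - b⟫ ≤ upperConst p * ‖F p δ a - F p δ b‖ ^ 2 := by
  obtain ⟨hlower, hupper⟩ := collinear_bounds hp hδ (norm_nonneg a) (norm_nonneg b)
  set α := (δ + ‖a‖) ^ ((p - 2) / 2)
  set β := (δ + ‖b‖) ^ ((p - 2) / 2)
  have hα : (δ + ‖a‖) ^ (p - 2) = α ^ 2 := (rpow_div_two_sq (by positivity) _).symm
  have hβ : (δ + ‖b‖) ^ (p - 2) = β ^ 2 := (rpow_div_two_sq (by positivity) _).symm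
  rw [hα, hβ] at hlower hupper
  rw [A, A, F, F, hα, hβ, inner_smul_sub_smul_sub, norm_smul_sub_smul_sq]
  exact bounds_of_collinear_bounds (by positivity) (by positivity)
    (abs_real_inner_le_norm a b) (lowerConst_pos hp).le (lowerConst_le_one p)
    (le_max_right _ _) hlower hupper

end ShiftedPower

theorem stmt3 (d : ℕ) (p δ : ℝ) (hp : 1 < p) (hδ : 0 ≤ δ) :
    ∃ c > (0:ℝ), ∃ C > (0:ℝ), ∀ a b : EuclideanSpace ℝ (Fin d),
      c * ‖(δ + ‖a‖) ^ ((p - 2) / 2) • a - (δ + ‖b‖) ^ ((p - 2) / 2) • b‖ ^ 2 ≤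
        (inner ℝ ((δ + ‖a‖) ^ (p - 2) • a - (δ + ‖b‖) ^ (p - 2) • b) (a - b) : ℝ) ∧
      (inner ℝ ((δ + ‖a‖) ^ (p - 2) • a - (δ + ‖b‖) ^ (p - 2) • b) (a - b) : ℝ) ≤
        C * ‖(δ + ‖a‖) ^ ((p - 2) / 2) • a - (δ + ‖b‖) ^ ((p - 2) / 2) • b‖ ^ 2 :=
  ⟨ShiftedPower.lowerConst p, ShiftedPower.lowerConst_pos hp, ShiftedPower.upperConst p,
    ShiftedPower.upperConst_pos p,
    fun a b => ShiftedPower.inner_A_sub_A_equiv_norm_F_sub_F_sq hp hδ a b⟩
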